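/- The bounded-star property is stable under rotation: for every graph G, vertex u and bound s, G is bounded-star with bound s if and only if r_u G is bounded-star with bound s; consequently the property is invariant under arbitrary rotation sequences. -/

import Mathlib

open scoped Classical

/-- Ports are identified with `ZMod 3`; the fixed cyclic permutation `p_ports` is `p ↦ p + 1`. -/
abbrev Port := ZMod 3

/-- A graph on the vertex-name type `α`: a vertex set together with a set of edges,
an edge being an unordered pair of (vertex, port) pairs. -/
structure PortGraph (α : Type) where
  verts : Set α
  edges : Set (Sym2 (α × Port))

namespace PortGraph

/-- Well-formedness: the vertex set is at most countable, edges are two-element subsets of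
`V(G) × π`, and edges are pairwise non-intersecting (each pair `u:p` occurs in at most one edge). -/
def Wf {α : Type} (G : PortGraph α) : Prop :=
  G.verts.Countable ∧
  (∀ e ∈ G.edges, ¬ e.IsDiag ∧ ∀ x ∈ e, Prod.fst x ∈ G.verts) ∧
  (∀ e₁ ∈ G.edges, ∀ e₂ ∈ G.edges, ∀ x : α × Port, x ∈ e₁ → x ∈ e₂ → e₁ = e₂)

/-- Apply a port-shift `c v` at every vertex `v`: the generalized form of a rotation. -/
def rotApply {α : Type} (c : α → Port) (G : PortGraph α) : PortGraph α :=
  ⟨G.verts, (Sym2.map fun x : α × Port => (x.1, x.2 + c x.1)) '' G.edges⟩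

/-- The action of a rotation sequence (a finite multiset of vertex rotations): each occurrence of
`v` in `s` rotates the ports at `v` once by `p_ports = (· + 1)`. -/
noncomputable def rotSeq {α : Type} (s : Multiset α) (G : PortGraph α) : PortGraph α :=
  rotApply (fun v => ((s.count v : ℕ) : Port)) G

/-- The single vertex rotation `r_u`. -/
noncomputable def rot {α : Type} (u : α) (G : PortGraph α) : PortGraph α := rotSeq {u} G

/-- Adjacency (regardless of ports). -/
def Adj {α : Type} (G : PortGraph α) (u v : α) : Prop :=
  ∃ p q : Port, s((u, p), (v, q)) ∈ G.edges

/-- `G.DistLe n u v` : the graph distance from `u` to `v` is at most `n`. -/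
def DistLe {α : Type} (G : PortGraph α) : ℕ → α → α → Prop
  | 0, u, v => u = v
  | n + 1, u, v => u = v ∨ ∃ w, G.Adj u w ∧ G.DistLe n w v

/-- The ball of radius `r` around `v`. -/
def ball {α : Type} (G : PortGraph α) (v : α) (r : ℕ) : Set α := {w | G.DistLe r v w}

/-- Induced subgraph on a set of vertices. -/
def induce {α : Type} (G : PortGraph α) (S : Set α) : PortGraph α :=
  ⟨G.verts ∩ S, {e ∈ G.edges | ∀ x ∈ e, Prod.fst x ∈ S}⟩

/-- Union of two graphs. -/
def union {α : Type} (G H : PortGraph α) : PortGraph α := ⟨G.verts ∪ H.verts, G.edges ∪ H.edges⟩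

/-- Relabel the vertices of a graph along a map. -/
def map {α β : Type} (h : α → β) (G : PortGraph α) : PortGraph β :=
  ⟨h '' G.verts, (Sym2.map (Prod.map h (id : Port → Port))) '' G.edges⟩

end PortGraph

/-- The inverse of a rotation sequence (using `r_u ^ 3 = id`). -/
noncomputable def invSeq {α : Type} (s : Multiset α) : Multiset α :=
  s.toFinset.val.bind fun u => Multiset.replicate ((3 - s.count u % 3) % 3) u

/-- Union of an indexed family of graphs. -/
def unionFam {α : Type} {ι : Sort*} (Gs : ι → PortGraph α) : PortGraph α :=
  ⟨⋃ i, (Gs i).verts, ⋃ i, (Gs i).edges⟩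

/-- Two graphs are consistent when any two of their edges sharing an endpoint `u:k` are equal. -/
def Consistent {α : Type} (G H : PortGraph α) : Prop :=
  ∀ e₁ ∈ G.edges, ∀ e₂ ∈ H.edges, ∀ x : α × Port, x ∈ e₁ → x ∈ e₂ → e₁ = e₂

/-- Subgraph relation. -/
def Subgraph {α : Type} (H G : PortGraph α) : Prop := H.verts ⊆ G.verts ∧ H.edges ⊆ G.edges

/-- A disk: a graph with a distinguished center. -/
structure Disk (α : Type) where
  graph : PortGraph α
  center : α

/-- The disk `G_v^r` of radius `r` centered at `v`: the subgraph induced by the vertices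
at graph distance at most `r` from `v`, with center `v`. -/
def PortGraph.disk {α : Type} (G : PortGraph α) (v : α) (r : ℕ) : Disk α :=
  ⟨G.induce (G.ball v r), v⟩

/-- Rotation sequences act on disks by acting on the underlying graph. -/
noncomputable def rotDisk {α : Type} (s : Multiset α) (D : Disk α) : Disk α := ⟨PortGraph.rotSeq s D.graph, D.center⟩

/-- Renaming of a disk along an isomorphism (bijective renaming of vertex names). -/
def Disk.rename {α : Type} (R : α ≃ α) (D : Disk α) : Disk α := ⟨D.graph.map R, R D.center⟩

/-- `D` is a disk of radius `r`, i.e. arises as `G_v^r` for some graph `G` and `v ∈ V(G)`. -/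
def IsDisk {α : Type} (r : ℕ) (D : Disk α) : Prop :=
  ∃ G : PortGraph α, G.Wf ∧ ∃ v ∈ G.verts, D = G.disk v r

/-- Vertex names produced by a local rule: sets of pairs `u.i` with `u` an old name and
`i ∈ {ε, 1, …, b}` a suffix (`ε` encoded as `0`). -/
abbrev NewName (α : Type) : Type := Set (α × ℕ)

/-- The action `R*` of an isomorphism on produced names: `R*({u.i, v.j, …}) = {R(u).i, R(v).j, …}`. -/
def starMap {α : Type} (R : α ≃ α) : NewName α → NewName α :=
  Set.image (Prod.map R (id : ℕ → ℕ))

/-- `f` is a local rule of radius `r`: it sends disks of radius `r` to graphs, (i) produced vertex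
names are subsets of `V(D).{ε,1,…,b}` for some bound `b`, (ii) images of disks of a same graph are
consistent, (iii) `f` commutes with isomorphisms. -/
def IsLocalRule {α : Type} (r : ℕ) (f : Disk α → PortGraph (NewName α)) : Prop :=
  (∀ D, IsDisk r D → (f D).Wf) ∧
  (∃ b : ℕ, ∀ D, IsDisk r D → ∀ w ∈ (f D).verts, ∀ x ∈ w, x.1 ∈ D.graph.verts ∧ x.2 ≤ b) ∧
  (∀ G : PortGraph α, G.Wf → ∀ u ∈ G.verts, ∀ v ∈ G.verts,
      Consistent (f (G.disk u r)) (f (G.disk v r))) ∧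
  (∀ D, IsDisk r D → ∀ R : α ≃ α, f (D.rename R) = (f D).map (starMap R))

/-- The localizable dynamics (CGD) induced by a local rule: `F(G) = ⋃_{v ∈ V(G)} f(G_v^r)`. -/
def inducedDyn {α : Type} (f : Disk α → PortGraph (NewName α)) (r : ℕ) (G : PortGraph α) :
    PortGraph (NewName α) :=
  ⟨⋃ v ∈ G.verts, (f (G.disk v r)).verts, ⋃ v ∈ G.verts, (f (G.disk v r)).edges⟩

/-- A function on graphs is rotation-commuting if every rotation sequence admits a conjugate. -/
def RotComm {α β : Type} (F : PortGraph α → PortGraph β) : Prop :=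
  ∀ G : PortGraph α, G.Wf → ∀ s : Multiset α, ∃ t : Multiset β, F (PortGraph.rotSeq s G) = PortGraph.rotSeq t (F G)

/-- A local rule of radius `r` is rotation-commuting if every rotation sequence on a disk admits a
conjugate. -/
def RotCommRule {α : Type} (r : ℕ) (f : Disk α → PortGraph (NewName α)) : Prop :=
  ∀ D : Disk α, IsDisk r D → ∀ s : Multiset α, ∃ t : Multiset (NewName α),
    f (rotDisk s D) = PortGraph.rotSeq t (f D)

/-- `w, vs` describe a path of length `n` in `G` (word `q₀p₀…` over `π²`, with `w i = (qᵢ, pᵢ)`). -/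
def IsPath {α : Type} (G : PortGraph α) (n : ℕ) (w : ℕ → Port × Port) (vs : ℕ → α) : Prop :=
  ∀ i < n, s((vs i, (w i).1), (vs (i + 1), (w i).2)) ∈ G.edges

/-- The path word `w` alternates at position `i`. -/
def AlternatesAt (w : ℕ → Port × Port) (i : ℕ) : Prop :=
  ((w i).2 = (w (i + 1)).1 + 1 ∧ (w (i + 1)).2 = (w (i + 2)).1 - 1) ∨
  ((w i).2 = (w (i + 1)).1 - 1 ∧ (w (i + 1)).2 = (w (i + 2)).1 + 1)

/-- A path word of length `n` is monotonous if it has no alternation. -/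
def Monotonous (n : ℕ) (w : ℕ → Port × Port) : Prop :=
  ∀ i, i + 2 < n → ¬ AlternatesAt w i

/-- A graph is bounded-star with bound `s` if all its monotonous paths have length at most `s`. -/
def BoundedStar {α : Type} (G : PortGraph α) (s : ℕ) : Prop :=
  ∀ n w vs, IsPath G n w vs → Monotonous n w → n ≤ s

/-- Generating relation for points of the interpretation `K(G)`:
`u:p ≡₀ v:q` iff `{u:(p+1), v:(q−1)} ∈ E(G)`. -/
def PointRel {α : Type} (G : PortGraph α) (x y : α × Port) : Prop :=
  s((x.1, x.2 + 1), (y.1, y.2 - 1)) ∈ G.edges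

/-- Triangles `u` and `v` of `K(G)` share a point. -/
def SharesPoint {α : Type} (G : PortGraph α) (u v : α) : Prop :=
  ∃ p q : Port, Relation.EqvGen (PointRel G) (u, p) (v, q)

/-- There is a monotonous path in `G` from `u` to `v`. -/
def MonPathFromTo {α : Type} (G : PortGraph α) (u v : α) : Prop :=
  ∃ n w vs, IsPath G n w vs ∧ Monotonous n w ∧ vs 0 = u ∧ vs n = v


/-!
A rotation adds a constant `c v` to every port at the vertex `v`. Whether a path alternates at a
position only depends on the differences `pᵢ - qᵢ₊₁` between the port by which the path enters a
vertex and the port by which it leaves it, and both ports are shifted by the same constant. So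
shifting the word of a path of `G` along the rotation gives a path of the rotated graph of the same
length, monotonous exactly when the original one is; since rotations are invertible, the
bounded-star property is invariant.
-/

namespace PortGraph

variable {α : Type}

lemma rotApply_rotApply (c c' : α → Port) (G : PortGraph α) :
    rotApply c' (rotApply c G) = rotApply (fun v => c v + c' v) G := by
  simp only [rotApply, ← Set.image_comp, ← Sym2.map_comp]
  congr! 3 with x
  simp [add_assoc]

lemma rotApply_zero (G : PortGraph α) : rotApply (fun _ => 0) G = G := by
  simp [rotApply, Sym2.map_id']

lemma rotApply_neg_rotApply (c : α → Port) (G : PortGraph α) :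
    rotApply (fun v => -c v) (rotApply c G) = G := by
  simp only [rotApply_rotApply, add_neg_cancel, rotApply_zero]

end PortGraph

open PortGraph

section

variable {α : Type}

def shiftWord (c : α → Port) (vs : ℕ → α) (w : ℕ → Port × Port) : ℕ → Port × Port :=
  fun i => ((w i).1 + c (vs i), (w i).2 + c (vs (i + 1)))

lemma IsPath.rotApply {G : PortGraph α} {n : ℕ} {w : ℕ → Port × Port} {vs : ℕ → α}
    (h : IsPath G n w vs) (c : α → Port) : IsPath (G.rotApply c) n (shiftWord c vs w) vs :=
  fun i hi => ⟨_, h i hi, rfl⟩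

lemma alternatesAt_shiftWord_iff (c : α → Port) (vs : ℕ → α) (w : ℕ → Port × Port) (i : ℕ) :
    AlternatesAt (shiftWord c vs w) i ↔ AlternatesAt w i := by
  have shift (x y k d : Port) : x + d = y + d + k ↔ x = y + k := by
    rw [add_right_comm, add_left_inj]
  simp only [AlternatesAt, shiftWord, Nat.add_assoc, sub_eq_add_neg, shift]

lemma monotonous_shiftWord_iff (c : α → Port) (vs : ℕ → α) (n : ℕ) (w : ℕ → Port × Port) :
    Monotonous n (shiftWord c vs w) ↔ Monotonous n w := by
  simp only [Monotonous, alternatesAt_shiftWord_iff]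

lemma BoundedStar.of_rotApply {G : PortGraph α} {c : α → Port} {s : ℕ}
    (h : BoundedStar (G.rotApply c) s) : BoundedStar G s :=
  fun n w vs hpath hmono =>
    h n _ vs (hpath.rotApply c) ((monotonous_shiftWord_iff c vs n w).mpr hmono)

lemma boundedStar_rotApply_iff (c : α → Port) (G : PortGraph α) (s : ℕ) :
    BoundedStar (G.rotApply c) s ↔ BoundedStar G s := by
  refine ⟨BoundedStar.of_rotApply, fun h => BoundedStar.of_rotApply (c := fun v => -c v) ?_⟩
  rwa [rotApply_neg_rotApply]

end

theorem stmt10_general {α : Type} (G : PortGraph α) (u : α) (s : ℕ) :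
    (BoundedStar G s ↔ BoundedStar (PortGraph.rot u G) s) ∧
    (∀ t : Multiset α, BoundedStar G s ↔ BoundedStar (PortGraph.rotSeq t G) s) :=
  ⟨(boundedStar_rotApply_iff _ G s).symm, fun _ => (boundedStar_rotApply_iff _ G s).symm⟩

/-- The bounded-star property is stable under rotation, and hence invariant
under arbitrary rotation sequences. -/
theorem stmt10 {α : Type} [Uncountable α] (G : PortGraph α) (hG : G.Wf) (u : α) (s : ℕ) :
    (BoundedStar G s ↔ BoundedStar (PortGraph.rot u G) s) ∧
    (∀ t : Multiset α, BoundedStar G s ↔ BoundedStar (PortGraph.rotSeq t G) s) :=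
  stmt10_general G u s
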